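/- Under SUTVA, absolute continuity of the potential outcome distributions, and completely random assignment with P(W_i = 1 | Y_i(1), Y_i(0), X_i) = π ∈ (0,1), the rank-OLS coefficient β̂_nox — defined as the OLS slope on W_i in the regression of R^Y_i/n on a constant and W_i — converges in probability, as n → ∞, to the rank-ATE τ_r(F_{Y(1)}, F_{Y(0)}). -/

import Mathlib

open MeasureTheory ProbabilityTheory Filter

/-- The rank average treatment effect of two distributions `F1`, `F0` on `ℝ`:
`τ_r(F1, F0) = P(Z1 ≥ Z0) - 1/2` where `Z1 ~ F1`, `Z0 ~ F0` are independent. -/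
noncomputable def rankATE (F1 F0 : Measure ℝ) : ℝ :=
  ((F1.prod F0) {p : ℝ × ℝ | p.2 ≤ p.1}).toReal - 1 / 2

/-- The OLS slope coefficient on the regressor `W` in a simple linear regression of the
outcome `V` on a constant and `W`, based on observations `i = 0, …, n-1`. -/
noncomputable def olsSlope (n : ℕ) (W V : ℕ → ℝ) : ℝ :=
  (∑ i ∈ Finset.range n,
      (W i - (∑ j ∈ Finset.range n, W j) / n) * (V i - (∑ j ∈ Finset.range n, V j) / n)) /
  (∑ i ∈ Finset.range n, (W i - (∑ j ∈ Finset.range n, W j) / n) ^ 2)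

/-!
For a binary regressor the OLS slope is the continuous function `(a - w v) / (w - w²)` of the
sample means `w` of `W`, `v` of the normalized ranks and `a` of `W i · R_i / n`. Ties occur with
probability zero because the outcome laws are atomless; without ties the ranks are a
permutation of `1, …, n`, so `v = (n + 1) / (2n) → 1/2`, while `w → π` by the law of large
numbers. The moment `a` is the V-statistic `n⁻² ∑ᵢⱼ W_i 1{Y_j ≤ Y_i}`. Its kernel is bounded
and the summands of disjoint index pairs are independent, so its variance is `O(1/n)` and
it converges to `m = E[W_i 1{Y_j ≤ Y_i}]` for units `i ≠ j`. Conditioning on the treatment of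
unit `j` gives `m = π (π/2 + (1 - π) P(Z₀ ≤ Z₁))`, and `(m - π/2) / (π - π²) = P(Z₀ ≤ Z₁) - 1/2`.
-/

open Finset Topology

/-- The OLS slope written through the moments `(mean of W·V, mean of W, mean of V)`; this is
`olsSlope` when `W` is binary, so that the mean of `W²` is the mean of `W`. -/
noncomputable def slopeOfMoments (p : ℝ × ℝ × ℝ) : ℝ :=
  (p.1 - p.2.1 * p.2.2) / (p.2.1 - p.2.1 ^ 2)

lemma olsSlope_eq_slopeOfMoments {n : ℕ} (hn : n ≠ 0) {W : ℕ → ℝ} (V : ℕ → ℝ)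
    (hW : ∀ i, W i = 0 ∨ W i = 1) :
    olsSlope n W V = slopeOfMoments ((∑ i ∈ range n, W i * V i) / n,
      (∑ i ∈ range n, W i) / n, (∑ i ∈ range n, V i) / n) := by
  have hn0 : (n : ℝ) ≠ 0 := Nat.cast_ne_zero.mpr hn
  have hWsq : ∀ i, W i ^ 2 = W i := fun i => by rcases hW i with h | h <;> simp [h]
  rw [olsSlope, slopeOfMoments]
  refine (congrArg₂ (· / ·) ?_ ?_).trans (mul_div_mul_left _ _ hn0) <;>
  · simp only [sub_mul, mul_sub, sub_sq, sum_sub_distrib, sum_add_distrib, ← sum_mul,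
      ← mul_sum, hWsq, sum_const, card_range, nsmul_eq_mul]
    field_simp
    ring

lemma continuousAt_slopeOfMoments {a w v : ℝ} (hw : w - w ^ 2 ≠ 0) :
    ContinuousAt slopeOfMoments (a, w, v) :=
  ContinuousAt.div (by fun_prop) (by fun_prop) hw

lemma sum_sum_rank_eq_of_injOn {n : ℕ} {y : ℕ → ℝ} (hy : Set.InjOn y (range n)) :
    ∑ i ∈ range n, ∑ j ∈ range n, (if y j ≤ y i then (1 : ℝ) else 0) = n * (n + 1) / 2 := by
  have hrow : ∀ i ∈ range n, ∑ j ∈ range n,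
      ((if y j ≤ y i then (1 : ℝ) else 0) + if y i ≤ y j then 1 else 0) = n + 1 := by
    intro i hi
    have hpair : ∀ j ∈ range n,
        ((if y j ≤ y i then (1 : ℝ) else 0) + if y i ≤ y j then 1 else 0)
          = 1 + if i = j then 1 else 0 := by
      intro j hj
      rcases eq_or_ne i j with rfl | hij
      · simp
      · have hne : y i ≠ y j := fun h => hij (hy (by simpa using hi) (by simpa using hj) h)
        rcases hne.lt_or_gt with h | h <;> simp [h.le, not_le.mpr h, hij]
    rw [sum_congr rfl hpair, sum_add_distrib, sum_ite_eq]
    simp [hi]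
  have htotal := sum_congr rfl hrow
  simp only [sum_add_distrib, sum_const, card_range, nsmul_eq_mul] at htotal
  rw [sum_comm (γ := ℕ) (f := fun i j => if y i ≤ y j then (1 : ℝ) else 0)] at htotal
  linarith

lemma tendsto_add_one_div_two_mul :
    Tendsto (fun n : ℕ => ((n : ℝ) + 1) / (2 * n)) atTop (𝓝 (1 / 2)) := by
  have h := ((tendsto_one_div_atTop_nhds_zero_nat (𝕜 := ℝ)).const_add 1).div_const 2
  rw [add_zero] at h
  refine h.congr' ((eventually_ne_atTop 0).mono fun n hn => ?_)
  field_simp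

lemma MeasureTheory.Measure.prod_diagonal_eq_zero {α : Type*} [MeasurableSpace α]
    [MeasurableEq α] (μ ν : Measure α) [SFinite ν] [NullSingletonClass ν] :
    μ.prod ν (Set.diagonal α) = 0 := by
  refine Measure.measure_prod_null_of_ae_null measurableSet_diagonal (.of_forall fun x => ?_)
  have hslice : Prod.mk x ⁻¹' Set.diagonal α = {x} := by ext; simp [eq_comm]
  simp [hslice]

lemma ProbabilityTheory.IndepFun.measure_setOf_eq_eq_zero {Ω α : Type*} [MeasurableSpace Ω]
    [MeasurableSpace α] [MeasurableEq α] {P : Measure Ω} [IsFiniteMeasure P] {U V : Ω → α}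
    (hU : Measurable U) (hV : Measurable V) (hUV : IndepFun U V P)
    [NullSingletonClass (P.map V)] :
    P {ω | U ω = V ω} = 0 := by
  rw [show {ω | U ω = V ω} = (fun ω => (U ω, V ω)) ⁻¹' Set.diagonal α from rfl,
    ← Measure.map_apply (hU.prodMk hV) measurableSet_diagonal,
    (indepFun_iff_map_prod_eq_prod_map_map hU.aemeasurable hV.aemeasurable).mp hUV]
  exact Measure.prod_diagonal_eq_zero _ _

lemma ae_injective_of_indepFun {Ω α : Type*} [MeasurableSpace Ω] [MeasurableSpace α]
    [MeasurableEq α] {P : Measure Ω} [IsFiniteMeasure P] {Y : ℕ → Ω → α}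
    (hY : ∀ i, Measurable (Y i)) (hindep : Pairwise fun i j => IndepFun (Y i) (Y j) P)
    (hnull : ∀ j, NullSingletonClass (P.map (Y j))) :
    ∀ᵐ ω ∂P, Function.Injective (Y · ω) := by
  refine ae_all_iff.2 fun i => ae_all_iff.2 fun j => ae_iff.2 ?_
  rcases eq_or_ne i j with rfl | hij
  · simp
  · simpa [hij] using (hindep hij).measure_setOf_eq_eq_zero (hY i) (hY j)

lemma MeasureTheory.Measure.real_prod_self_setOf_snd_le_fst (μ : Measure ℝ)
    [IsProbabilityMeasure μ] [NullSingletonClass μ] :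
    (μ.prod μ).real {p : ℝ × ℝ | p.2 ≤ p.1} = 1 / 2 := by
  have hle : MeasurableSet {p : ℝ × ℝ | p.1 ≤ p.2} :=
    measurableSet_le measurable_fst measurable_snd
  have hswap : (μ.prod μ).real {p : ℝ × ℝ | p.2 ≤ p.1} = (μ.prod μ).real {p | p.1 ≤ p.2} := by
    conv_lhs => rw [← Measure.prod_swap]
    rw [map_measureReal_apply measurable_swap (measurableSet_le measurable_snd measurable_fst)]
    rfl
  have hunion : {p : ℝ × ℝ | p.2 ≤ p.1} ∪ {p | p.1 ≤ p.2} = Set.univ := by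
    ext p; simp [le_total]
  have hinter : {p : ℝ × ℝ | p.2 ≤ p.1} ∩ {p | p.1 ≤ p.2} = Set.diagonal ℝ := by
    ext p; simp [le_antisymm_iff, and_comm]
  have := measureReal_union_add_inter (μ := μ.prod μ) (s := {p : ℝ × ℝ | p.2 ≤ p.1}) hle
  rw [hunion, hinter, measureReal_def (μ.prod μ) (Set.diagonal ℝ),
    Measure.prod_diagonal_eq_zero, ENNReal.toReal_zero, probReal_univ, ← hswap] at this
  linarith

lemma integral_measureReal_Iic (μ ν : Measure ℝ) [IsFiniteMeasure μ] [IsFiniteMeasure ν] :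
    ∫ t, ν.real (Set.Iic t) ∂μ = (μ.prod ν).real {p : ℝ × ℝ | p.2 ≤ p.1} := by
  have hmono : Monotone fun t => ν (Set.Iic t) :=
    fun s t hst => measure_mono (Set.Iic_subset_Iic.mpr hst)
  rw [measureReal_def, Measure.prod_apply (measurableSet_le measurable_snd measurable_fst)]
  exact integral_toReal hmono.measurable.aemeasurable (.of_forall fun t => measure_lt_top _ _)

lemma ProbabilityTheory.IndepFun.measureReal_inter_preimage_eq_mul {Ω α β : Type*}
    [MeasurableSpace Ω] [MeasurableSpace α] [MeasurableSpace β] {P : Measure Ω}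
    {U : Ω → α} {V : Ω → β} (hUV : IndepFun U V P) {s : Set α} {t : Set β}
    (hs : MeasurableSet s) (ht : MeasurableSet t) :
    P.real (U ⁻¹' s ∩ V ⁻¹' t) = P.real (U ⁻¹' s) * P.real (V ⁻¹' t) := by
  simp only [measureReal_def, hUV.measure_inter_preimage_eq_mul _ _ hs ht, ENNReal.toReal_mul]

lemma integral_eq_measureReal_of_binary {Ω : Type*} [MeasurableSpace Ω] {P : Measure Ω}
    {f : Ω → ℝ} (hf : Measurable f) (hbin : ∀ ω, f ω = 0 ∨ f ω = 1) :
    ∫ ω, f ω ∂P = P.real {ω | f ω = 1} := by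
  rw [← integral_indicator_one (s := {ω | f ω = 1}) (hf (measurableSet_singleton 1))]
  refine integral_congr_ae (.of_forall fun ω => ?_)
  rcases hbin ω with h | h <;> simp [h]

section ConvergenceInMeasure

variable {Ω ι E F : Type*} [MeasurableSpace Ω] {P : Measure Ω} {l : Filter ι}

lemma tendstoInMeasure_of_tendsto_integral_sq_sub [IsFiniteMeasure P] {f : ι → Ω → ℝ} {a : ℝ}
    (hint : ∀ᶠ i in l, Integrable (fun ω => (f i ω - a) ^ 2) P)
    (hlim : Tendsto (fun i => ∫ ω, (f i ω - a) ^ 2 ∂P) l (𝓝 0)) :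
    TendstoInMeasure P f l (fun _ => a) := by
  rw [tendstoInMeasure_iff_measureReal_dist]
  intro ε hε
  have hε2 : 0 < ε ^ 2 := by positivity
  have hchebyshev : ∀ᶠ i in l,
      P.real {ω | ε ≤ dist (f i ω) a} ≤ (∫ ω, (f i ω - a) ^ 2 ∂P) / ε ^ 2 := by
    filter_upwards [hint] with i hi
    have hsub : {ω | ε ≤ dist (f i ω) a} ⊆ {ω | ε ^ 2 ≤ (f i ω - a) ^ 2} := fun ω hω => by
      simpa [Real.dist_eq, sq_abs] using pow_le_pow_left₀ hε.le hω 2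
    rw [le_div_iff₀' hε2]
    exact (mul_le_mul_of_nonneg_left (measureReal_mono hsub) hε2.le).trans
      (mul_meas_ge_le_integral_of_nonneg (.of_forall fun ω => sq_nonneg _) hi _)
  refine tendsto_of_tendsto_of_tendsto_of_le_of_le' tendsto_const_nhds ?_
    (.of_forall fun i => measureReal_nonneg) hchebyshev
  simpa using hlim.div_const (ε ^ 2)

lemma MeasureTheory.TendstoInMeasure.prodMk [PseudoMetricSpace E] [PseudoMetricSpace F]
    {f : ι → Ω → E} {g : ι → Ω → F} {f' : Ω → E} {g' : Ω → F}
    (hf : TendstoInMeasure P f l f') (hg : TendstoInMeasure P g l g') :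
    TendstoInMeasure P (fun i ω => (f i ω, g i ω)) l (fun ω => (f' ω, g' ω)) := by
  rw [tendstoInMeasure_iff_dist] at *
  intro ε hε
  refine tendsto_of_tendsto_of_tendsto_of_le_of_le tendsto_const_nhds
    (by simpa using (hf ε hε).add (hg ε hε)) (fun i => zero_le) (fun i => ?_)
  refine (measure_mono fun ω hω => ?_).trans (measure_union_le _ _)
  simpa [Prod.dist_eq, le_max_iff] using hω

lemma MeasureTheory.TendstoInMeasure.comp_continuousAt [PseudoMetricSpace E] [PseudoMetricSpace F]
    {f : ι → Ω → E} {c : E} {φ : E → F}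
    (hf : TendstoInMeasure P f l (fun _ => c)) (hφ : ContinuousAt φ c) :
    TendstoInMeasure P (fun i ω => φ (f i ω)) l (fun _ => φ c) := by
  rw [tendstoInMeasure_iff_dist] at *
  intro ε hε
  obtain ⟨δ, hδ, hφδ⟩ := Metric.continuousAt_iff.mp hφ ε hε
  refine tendsto_of_tendsto_of_tendsto_of_le_of_le tendsto_const_nhds (hf δ hδ)
    (fun i => zero_le) (fun i => measure_mono fun ω hω => ?_)
  by_contra hlt
  exact (not_le.mpr (hφδ (not_le.mp hlt))) hω

lemma tendstoInMeasure_sum_range_div [IsFiniteMeasure P] {X : ℕ → Ω → ℝ}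
    (hint : Integrable (X 0) P) (hindep : Pairwise fun i j => IndepFun (X i) (X j) P)
    (hident : ∀ i, IdentDistrib (X i) (X 0) P P) :
    TendstoInMeasure P (fun n ω => (∑ i ∈ range n, X i ω) / n) atTop (fun _ => ∫ ω, X 0 ω ∂P) :=
  tendstoInMeasure_of_tendsto_ae
    (fun n => by
      have := fun i => ((hident i).integrable_iff.2 hint).aestronglyMeasurable
      fun_prop)
    (strong_law_ae_real X hint hindep hident)

end ConvergenceInMeasure

noncomputable def vStatistic {E : Type*} (h : E × E → ℝ) (x : ℕ → E) (n : ℕ) : ℝ :=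
  (∑ i ∈ range n, ∑ j ∈ range n, h (x i, x j)) / n ^ 2

lemma vStatistic_sub_eq {E : Type*} {h : E × E → ℝ} {m : ℝ} {n : ℕ} (hn : n ≠ 0)
    (x : ℕ → E) :
    vStatistic h x n - m = (∑ p ∈ range n ×ˢ range n, (h (x p.1, x p.2) - m)) / n ^ 2 := by
  have hn0 : (n : ℝ) ≠ 0 := Nat.cast_ne_zero.mpr hn
  rw [vStatistic, sum_product]
  simp only [sum_sub_distrib, sum_const, card_range, nsmul_eq_mul]
  field_simp

/-- Bound for `E[(h(Ξ_i, Ξ_j) - m)(h(Ξ_k, Ξ_l) - m)]`: overlapping index pairs contribute at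
most one; disjoint pairs are independent, and only diagonal pairs have a biased mean. -/
def vStatCovBound (p q : ℕ × ℕ) : ℝ :=
  (if p.1 = q.1 then 1 else 0) + (if p.1 = q.2 then 1 else 0) + (if p.2 = q.1 then 1 else 0)
    + (if p.2 = q.2 then 1 else 0) + (if p.1 = p.2 then 1 else 0) * (if q.1 = q.2 then 1 else 0)

lemma sum_sum_vStatCovBound (n : ℕ) :
    ∑ p ∈ range n ×ˢ range n, ∑ q ∈ range n ×ˢ range n, vStatCovBound p q
      = 4 * n ^ 3 + n ^ 2 := by
  have hfst : ∀ a ∈ range n, ∑ q ∈ range n ×ˢ range n, (if a = q.1 then (1 : ℝ) else 0) = n := by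
    intro a ha
    rw [sum_product, sum_comm]
    simp only [sum_ite_eq, if_pos ha, sum_const, card_range, nsmul_eq_mul, mul_one]
  have hsnd : ∀ a ∈ range n, ∑ q ∈ range n ×ˢ range n, (if a = q.2 then (1 : ℝ) else 0) = n := by
    intro a ha
    rw [sum_product]
    simp only [sum_ite_eq, if_pos ha, sum_const, card_range, nsmul_eq_mul, mul_one]
  have hdiag : ∑ q ∈ range n ×ˢ range n, (if q.1 = q.2 then (1 : ℝ) else 0) = n := by
    rw [sum_product, sum_congr rfl fun x hx => by rw [sum_ite_eq, if_pos hx]]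
    simp
  have hrow : ∀ p ∈ range n ×ˢ range n, ∑ q ∈ range n ×ˢ range n, vStatCovBound p q
      = 4 * n + n * (if p.1 = p.2 then 1 else 0) := by
    intro p hp
    rw [mem_product] at hp
    simp only [vStatCovBound, sum_add_distrib, ← mul_sum, hfst _ hp.1, hfst _ hp.2,
      hsnd _ hp.1, hsnd _ hp.2, hdiag]
    ring
  rw [sum_congr rfl hrow, sum_add_distrib, ← mul_sum _ _ (n : ℝ), hdiag]
  simp only [sum_const, card_product, card_range, nsmul_eq_mul]
  push_cast
  ring

lemma abs_mul_kernel_sub_le {E : Type*} {h : E × E → ℝ} {m : ℝ} (hD : ∀ x, |h x - m| ≤ 1)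
    (x y : E × E) :
    |(h x - m) * (h y - m)| ≤ 1 := by
  rw [abs_mul]
  exact mul_le_one₀ (hD x) (abs_nonneg _) (hD y)

section VStatistic

variable {Ω E : Type*} [MeasurableSpace Ω] [MeasurableSpace E] {P : Measure Ω}
  [IsProbabilityMeasure P] {Ξ : ℕ → Ω → E} {h : E × E → ℝ} {m : ℝ}

lemma integral_comp_prodMk_eq_integral_prod (hΞ : ∀ i, Measurable (Ξ i))
    (hindep : iIndepFun Ξ P) (hident : ∀ i, IdentDistrib (Ξ i) (Ξ 0) P P) (hh : Measurable h)
    {i j : ℕ} (hij : i ≠ j) :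
    ∫ ω, h (Ξ i ω, Ξ j ω) ∂P = ∫ x, h x ∂((P.map (Ξ 0)).prod (P.map (Ξ 0))) := by
  rw [← integral_map ((hΞ i).prodMk (hΞ j)).aemeasurable hh.aestronglyMeasurable,
    (indepFun_iff_map_prod_eq_prod_map_map (hΞ i).aemeasurable (hΞ j).aemeasurable).mp
      (hindep.indepFun hij), (hident i).map_eq, (hident j).map_eq]

lemma integrable_kernel_sub (hΞ : ∀ i, Measurable (Ξ i)) (hh : Measurable h)
    (hD : ∀ x, |h x - m| ≤ 1) (i j : ℕ) :
    Integrable (fun ω => h (Ξ i ω, Ξ j ω) - m) P :=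
  .of_bound ((hh.comp ((hΞ i).prodMk (hΞ j))).sub_const m).aestronglyMeasurable 1
    (.of_forall fun _ => hD _)

lemma integrable_mul_kernel_sub (hΞ : ∀ i, Measurable (Ξ i)) (hh : Measurable h)
    (hD : ∀ x, |h x - m| ≤ 1) (p q : ℕ × ℕ) :
    Integrable (fun ω => (h (Ξ p.1 ω, Ξ p.2 ω) - m) * (h (Ξ q.1 ω, Ξ q.2 ω) - m)) P :=
  .of_bound ((integrable_kernel_sub hΞ hh hD p.1 p.2).1.mul
      (integrable_kernel_sub hΞ hh hD q.1 q.2).1) 1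
    (.of_forall fun _ => abs_mul_kernel_sub_le hD _ _)

lemma abs_integral_kernel_sub_le (hΞ : ∀ i, Measurable (Ξ i)) (hh : Measurable h)
    (hD : ∀ x, |h x - m| ≤ 1) (hoff : ∀ i j, i ≠ j → ∫ ω, h (Ξ i ω, Ξ j ω) ∂P = m)
    (i j : ℕ) :
    |∫ ω, (h (Ξ i ω, Ξ j ω) - m) ∂P| ≤ if i = j then 1 else 0 := by
  split_ifs with hij
  · simpa using norm_integral_le_of_norm_le_const (μ := P)
      (f := fun ω => h (Ξ i ω, Ξ j ω) - m) (.of_forall fun _ => hD _)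
  · have hint : Integrable (fun ω => h (Ξ i ω, Ξ j ω)) P :=
      ((integrable_kernel_sub hΞ hh hD i j).add (integrable_const m)).congr
        (.of_forall fun ω => by simp)
    simp [integral_sub hint (integrable_const m), hoff i j hij]

lemma integral_mul_kernel_sub_le (hΞ : ∀ i, Measurable (Ξ i)) (hindep : iIndepFun Ξ P)
    (hh : Measurable h) (hD : ∀ x, |h x - m| ≤ 1)
    (hoff : ∀ i j, i ≠ j → ∫ ω, h (Ξ i ω, Ξ j ω) ∂P = m) (p q : ℕ × ℕ) :
    ∫ ω, (h (Ξ p.1 ω, Ξ p.2 ω) - m) * (h (Ξ q.1 ω, Ξ q.2 ω) - m) ∂P ≤ vStatCovBound p q := by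
  have hind : ∀ (b : Prop) [Decidable b], (0 : ℝ) ≤ if b then 1 else 0 := fun b _ => by
    split_ifs <;> norm_num
  by_cases hov : p.1 = q.1 ∨ p.1 = q.2 ∨ p.2 = q.1 ∨ p.2 = q.2
  · have hle_one : ∫ ω, (h (Ξ p.1 ω, Ξ p.2 ω) - m) * (h (Ξ q.1 ω, Ξ q.2 ω) - m) ∂P ≤ 1 := by
      refine (le_abs_self _).trans ?_
      simpa using norm_integral_le_of_norm_le_const (μ := P) (C := 1)
        (f := fun ω => (h (Ξ p.1 ω, Ξ p.2 ω) - m) * (h (Ξ q.1 ω, Ξ q.2 ω) - m))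
        (.of_forall fun _ => abs_mul_kernel_sub_le hD _ _)
    have hone_le : 1 ≤ vStatCovBound p q := by
      have := mul_nonneg (hind (p.1 = p.2)) (hind (q.1 = q.2))
      unfold vStatCovBound
      rcases hov with h' | h' | h' | h' <;> simp only [if_pos h'] <;>
        linarith [hind (p.1 = q.1), hind (p.1 = q.2), hind (p.2 = q.1), hind (p.2 = q.2)]
    exact hle_one.trans hone_le
  · simp only [not_or] at hov
    obtain ⟨h11, h12, h21, h22⟩ := hov
    have hpq : IndepFun (fun ω => h (Ξ p.1 ω, Ξ p.2 ω) - m)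
        (fun ω => h (Ξ q.1 ω, Ξ q.2 ω) - m) P :=
      (hindep.indepFun_prodMk_prodMk hΞ _ _ _ _ h11 h12 h21 h22).comp
        (hh.sub_const m) (hh.sub_const m)
    rw [hpq.integral_fun_mul_eq_mul_integral (integrable_kernel_sub hΞ hh hD _ _).1
      (integrable_kernel_sub hΞ hh hD _ _).1]
    simp only [vStatCovBound, if_neg h11, if_neg h12, if_neg h21, if_neg h22, zero_add]
    refine (le_abs_self _).trans ?_
    rw [abs_mul]
    exact mul_le_mul (abs_integral_kernel_sub_le hΞ hh hD hoff _ _)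
      (abs_integral_kernel_sub_le hΞ hh hD hoff _ _) (abs_nonneg _) (hind _)

lemma integrable_sq_sum_kernel_sub (hΞ : ∀ i, Measurable (Ξ i)) (hh : Measurable h)
    (hD : ∀ x, |h x - m| ≤ 1) (n : ℕ) :
    Integrable (fun ω => (∑ p ∈ range n ×ˢ range n, (h (Ξ p.1 ω, Ξ p.2 ω) - m)) ^ 2) P := by
  simp only [sq, sum_mul_sum]
  exact integrable_finsetSum _ fun p _ => integrable_finsetSum _ fun q _ =>
    integrable_mul_kernel_sub hΞ hh hD p q

lemma integral_sq_sum_kernel_sub_le (hΞ : ∀ i, Measurable (Ξ i)) (hindep : iIndepFun Ξ P)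
    (hh : Measurable h) (hD : ∀ x, |h x - m| ≤ 1)
    (hoff : ∀ i j, i ≠ j → ∫ ω, h (Ξ i ω, Ξ j ω) ∂P = m) (n : ℕ) :
    ∫ ω, (∑ p ∈ range n ×ˢ range n, (h (Ξ p.1 ω, Ξ p.2 ω) - m)) ^ 2 ∂P
      ≤ 4 * n ^ 3 + n ^ 2 := by
  have hint := integrable_mul_kernel_sub (P := P) hΞ hh hD
  rw [← sum_sum_vStatCovBound]
  simp only [sq, sum_mul_sum]
  rw [integral_finsetSum _ fun p _ => integrable_finsetSum _ fun q _ => hint p q]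
  refine sum_le_sum fun p _ => ?_
  rw [integral_finsetSum _ fun q _ => hint p q]
  exact sum_le_sum fun q _ => integral_mul_kernel_sub_le hΞ hindep hh hD hoff p q

theorem tendstoInMeasure_vStatistic (hΞ : ∀ i, Measurable (Ξ i)) (hindep : iIndepFun Ξ P)
    (hh : Measurable h) (hD : ∀ x, |h x - m| ≤ 1)
    (hoff : ∀ i j, i ≠ j → ∫ ω, h (Ξ i ω, Ξ j ω) ∂P = m) :
    TendstoInMeasure P (fun n ω => vStatistic h (Ξ · ω) n) atTop (fun _ => m) := by
  have hmoment : ∀ n : ℕ, n ≠ 0 →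
      Integrable (fun ω => (vStatistic h (Ξ · ω) n - m) ^ 2) P ∧
      ∫ ω, (vStatistic h (Ξ · ω) n - m) ^ 2 ∂P ≤ 5 / n := by
    intro n hn
    have hn1 : (1 : ℝ) ≤ n := Nat.one_le_cast.mpr (Nat.one_le_iff_ne_zero.mpr hn)
    have hle := integral_sq_sum_kernel_sub_le hΞ hindep hh hD hoff n
    simp only [vStatistic_sub_eq hn, div_pow]
    refine ⟨(integrable_sq_sum_kernel_sub hΞ hh hD n).div_const _, ?_⟩
    rw [integral_div, div_le_div_iff₀ (by positivity) (by positivity)]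
    nlinarith [pow_le_pow_right₀ hn1 (show 2 ≤ 3 by norm_num)]
  have hev : ∀ᶠ n : ℕ in atTop, n ≠ 0 := eventually_ne_atTop 0
  refine tendstoInMeasure_of_tendsto_integral_sq_sub (hev.mono fun n hn => (hmoment n hn).1) ?_
  exact tendsto_of_tendsto_of_tendsto_of_le_of_le' tendsto_const_nhds
    (tendsto_const_div_atTop_nhds_zero_nat 5)
    (.of_forall fun n => integral_nonneg fun ω => sq_nonneg _)
    (hev.mono fun n hn => (hmoment n hn).2)

end VStatistic

/-- At `((W i, Y i), (W j, Y j))` this is `W i * 1{Y j ≤ Y i}` when `W i` is binary. -/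
noncomputable def rankKernel (z : (ℝ × ℝ) × (ℝ × ℝ)) : ℝ :=
  if z.1.1 = 1 ∧ z.2.2 ≤ z.1.2 then 1 else 0

lemma measurable_rankKernel : Measurable rankKernel :=
  Measurable.ite ((measurableSet_singleton 1).preimage (measurable_fst.comp measurable_fst)
    |>.inter (measurableSet_le (measurable_snd.comp measurable_snd)
      (measurable_snd.comp measurable_fst))) measurable_const measurable_const

lemma rankKernel_mem_Icc (z : (ℝ × ℝ) × (ℝ × ℝ)) : rankKernel z ∈ Set.Icc (0 : ℝ) 1 := by
  unfold rankKernel; split_ifs <;> norm_num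

lemma abs_rankKernel_sub_le {m : ℝ} (hm : m ∈ Set.Icc (0 : ℝ) 1) (z : (ℝ × ℝ) × (ℝ × ℝ)) :
    |rankKernel z - m| ≤ 1 := by
  rw [abs_le]
  constructor <;> linarith [hm.1, hm.2, (rankKernel_mem_Icc z).1, (rankKernel_mem_Icc z).2]

lemma integrable_rankKernel (ρ : Measure ((ℝ × ℝ) × (ℝ × ℝ))) [IsFiniteMeasure ρ] :
    Integrable rankKernel ρ :=
  .of_bound measurable_rankKernel.aestronglyMeasurable 1 (.of_forall fun z => by
    simpa [abs_of_nonneg (rankKernel_mem_Icc z).1] using (rankKernel_mem_Icc z).2)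

lemma integral_rankKernel_mem_Icc (ρ : Measure ((ℝ × ℝ) × (ℝ × ℝ))) [IsProbabilityMeasure ρ] :
    ∫ z, rankKernel z ∂ρ ∈ Set.Icc (0 : ℝ) 1 :=
  ⟨integral_nonneg fun z => (rankKernel_mem_Icc z).1,
    (integral_mono (integrable_rankKernel ρ) (integrable_const 1)
      fun z => (rankKernel_mem_Icc z).2).trans (by simp)⟩

lemma integral_rankKernel_prod (ρ : Measure (ℝ × ℝ)) [IsProbabilityMeasure ρ] :
    ∫ z, rankKernel z ∂(ρ.prod ρ)
      = ∫ z, (if z.1 = 1 then ρ.real {z' | z'.2 ≤ z.2} else 0) ∂ρ := by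
  rw [integral_prod _ (integrable_rankKernel _)]
  refine integral_congr_ae (.of_forall fun z => ?_)
  dsimp only
  split_ifs with hz
  · simp only [rankKernel, hz, true_and]
    exact integral_indicator_one (measurableSet_le measurable_snd measurable_const)
  · simp [rankKernel, hz]

lemma olsSlope_rank_eq {n : ℕ} (hn : n ≠ 0) {w y : ℕ → ℝ} (hw : ∀ i, w i = 0 ∨ w i = 1)
    (hy : Set.InjOn y (range n)) :
    olsSlope n w (fun i => (∑ j ∈ range n, if y j ≤ y i then (1 : ℝ) else 0) / n)
      = slopeOfMoments (vStatistic rankKernel (fun i => (w i, y i)) n,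
          (∑ i ∈ range n, w i) / n, (n + 1) / (2 * n)) := by
  have hn0 : (n : ℝ) ≠ 0 := Nat.cast_ne_zero.mpr hn
  have hkernel : ∀ i j, rankKernel ((w i, y i), (w j, y j)) = w i * if y j ≤ y i then 1 else 0 :=
    fun i j => by rcases hw i with h | h <;> simp [rankKernel, h]
  rw [olsSlope_eq_slopeOfMoments hn _ hw, ← sum_div, sum_sum_rank_eq_of_injOn hy]
  congr 2
  · simp only [vStatistic, hkernel, ← mul_sum, sum_div]
    refine sum_congr rfl fun i _ => ?_
    rw [← sum_div]
    field_simp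
  · field_simp

section PotentialOutcomes

variable {Ω : Type*} [MeasurableSpace Ω] {P : Measure Ω} {W Y1 Y0 : Ω → ℝ}

lemma nullSingletonClass_map_observed (hW : Measurable W) (hY1 : Measurable Y1)
    (hY0 : Measurable Y0) (hbin : ∀ ω, W ω = 0 ∨ W ω = 1) [NullSingletonClass (P.map Y1)]
    [NullSingletonClass (P.map Y0)] :
    NullSingletonClass (P.map fun ω => Y1 ω * W ω + Y0 ω * (1 - W ω)) := by
  refine ⟨fun x => ?_⟩
  rw [Measure.map_apply (by fun_prop) (measurableSet_singleton x)]
  refine measure_mono_null (t := Y1 ⁻¹' {x} ∪ Y0 ⁻¹' {x}) (fun ω hω => ?_) ?_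
  · rcases hbin ω with h | h <;> simp_all
  · rw [measure_union_null_iff, ← Measure.map_apply hY1 (measurableSet_singleton x),
      ← Measure.map_apply hY0 (measurableSet_singleton x)]
    simp

variable [IsProbabilityMeasure P] {π : ℝ}

lemma measureReal_observed_le (hW : Measurable W) (hY1 : Measurable Y1) (hY0 : Measurable Y0)
    (hbin : ∀ ω, W ω = 0 ∨ W ω = 1) (hWY1 : IndepFun W Y1 P) (hWY0 : IndepFun W Y0 P)
    (hπ : P.real {ω | W ω = 1} = π) (t : ℝ) :
    P.real {ω | Y1 ω * W ω + Y0 ω * (1 - W ω) ≤ t}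
      = π * (P.map Y1).real (Set.Iic t) + (1 - π) * (P.map Y0).real (Set.Iic t) := by
  have hsplit : {ω | Y1 ω * W ω + Y0 ω * (1 - W ω) ≤ t}
      = (W ⁻¹' {1} ∩ Y1 ⁻¹' Set.Iic t) ∪ (W ⁻¹' {1}ᶜ ∩ Y0 ⁻¹' Set.Iic t) := by
    ext ω
    rcases hbin ω with h | h <;> simp [h]
  rw [hsplit, measureReal_union (Set.disjoint_left.mpr fun ω h1 h0 => h0.1 h1.1)
      ((hW (measurableSet_singleton 1).compl).inter (hY0 measurableSet_Iic)),
    hWY1.measureReal_inter_preimage_eq_mul (measurableSet_singleton 1) measurableSet_Iic,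
    hWY0.measureReal_inter_preimage_eq_mul (measurableSet_singleton 1).compl measurableSet_Iic,
    Set.preimage_compl, probReal_compl_eq_one_sub (hW (measurableSet_singleton 1)),
    map_measureReal_apply hY1 measurableSet_Iic, map_measureReal_apply hY0 measurableSet_Iic]
  rw [show W ⁻¹' {1} = {ω | W ω = 1} from rfl, hπ]

lemma integral_rankKernel_map_prod_eq_mul_integral (hW : Measurable W) (hY1 : Measurable Y1)
    (hY0 : Measurable Y0) (hbin : ∀ ω, W ω = 0 ∨ W ω = 1) (hWY1 : IndepFun W Y1 P)
    (hπ : P.real {ω | W ω = 1} = π) :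
    ∫ z, rankKernel z ∂((P.map fun ω => (W ω, Y1 ω * W ω + Y0 ω * (1 - W ω))).prod
        (P.map fun ω => (W ω, Y1 ω * W ω + Y0 ω * (1 - W ω))))
      = π * ∫ t, P.real {ω | Y1 ω * W ω + Y0 ω * (1 - W ω) ≤ t} ∂(P.map Y1) := by
  have hZ : Measurable fun ω => (W ω, Y1 ω * W ω + Y0 ω * (1 - W ω)) := by fun_prop
  have : IsProbabilityMeasure (P.map fun ω => (W ω, Y1 ω * W ω + Y0 ω * (1 - W ω))) :=
    Measure.isProbabilityMeasure_map hZ.aemeasurable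
  set G : ℝ → ℝ := fun t => P.real {ω | Y1 ω * W ω + Y0 ω * (1 - W ω) ≤ t}
  have hG : Measurable G :=
    Monotone.measurable fun s t hst => measureReal_mono fun ω hω => le_trans hω hst
  have hφ : Measurable fun w : ℝ => if w = 1 then (1 : ℝ) else 0 :=
    Measurable.ite (measurableSet_singleton 1) measurable_const measurable_const
  have hkernel : Measurable fun z : ℝ × ℝ => if z.1 = 1 then G z.2 else 0 :=
    Measurable.ite (measurableSet_eq_fun measurable_fst measurable_const) (hG.comp measurable_snd)
      measurable_const
  have hslice : ∀ t, (P.map fun ω => (W ω, Y1 ω * W ω + Y0 ω * (1 - W ω))).real {z | z.2 ≤ t}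
      = G t := fun t => map_measureReal_apply hZ (measurableSet_le measurable_snd measurable_const)
  have htreated : ∀ ω, (if W ω = 1 then G (Y1 ω * W ω + Y0 ω * (1 - W ω)) else 0)
      = (if W ω = 1 then 1 else 0) * G (Y1 ω) := fun ω => by
    rcases hbin ω with h | h <;> simp [h]
  have hmean : ∫ ω, (if W ω = 1 then (1 : ℝ) else 0) ∂P = π :=
    hπ ▸ integral_indicator_one (hW (measurableSet_singleton 1))
  have hindep := (hWY1.comp hφ hG).integral_fun_mul_eq_mul_integral
    (hφ.comp hW).aestronglyMeasurable (hG.comp hY1).aestronglyMeasurable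
  simp only [Function.comp_apply] at hindep
  rw [integral_rankKernel_prod,
    integral_congr_ae (g := fun z => if z.1 = 1 then G z.2 else 0)
      (.of_forall fun z => by simp only [hslice]),
    integral_map hZ.aemeasurable hkernel.aestronglyMeasurable]
  simp only [htreated]
  rw [hindep, hmean, ← integral_map hY1.aemeasurable hG.aestronglyMeasurable]

lemma integral_rankKernel_map_prod (hW : Measurable W) (hY1 : Measurable Y1)
    (hY0 : Measurable Y0) (hbin : ∀ ω, W ω = 0 ∨ W ω = 1) (hWY1 : IndepFun W Y1 P)
    (hWY0 : IndepFun W Y0 P) (hπ : P.real {ω | W ω = 1} = π) [NullSingletonClass (P.map Y1)] :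
    ∫ z, rankKernel z ∂((P.map fun ω => (W ω, Y1 ω * W ω + Y0 ω * (1 - W ω))).prod
        (P.map fun ω => (W ω, Y1 ω * W ω + Y0 ω * (1 - W ω))))
      = π * (π / 2 + (1 - π) * ((P.map Y1).prod (P.map Y0)).real {p | p.2 ≤ p.1}) := by
  have : IsProbabilityMeasure (P.map Y1) := Measure.isProbabilityMeasure_map hY1.aemeasurable
  have : IsProbabilityMeasure (P.map Y0) := Measure.isProbabilityMeasure_map hY0.aemeasurable
  have hcdf : ∀ μ : Measure ℝ, [IsProbabilityMeasure μ] →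
      Integrable (fun t => μ.real (Set.Iic t)) (P.map Y1) := fun μ _ =>
    .of_bound (Monotone.measurable fun s t hst =>
        measureReal_mono (Set.Iic_subset_Iic.mpr hst)).aestronglyMeasurable 1
      (.of_forall fun t => by simp [abs_of_nonneg measureReal_nonneg])
  rw [integral_rankKernel_map_prod_eq_mul_integral hW hY1 hY0 hbin hWY1 hπ,
    integral_congr_ae (.of_forall (measureReal_observed_le hW hY1 hY0 hbin hWY1 hWY0 hπ)),
    integral_add ((hcdf _).const_mul π) ((hcdf _).const_mul (1 - π)),
    integral_const_mul, integral_const_mul, integral_measureReal_Iic, integral_measureReal_Iic,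
    Measure.real_prod_self_setOf_snd_le_fst]
  ring

end PotentialOutcomes

lemma slopeOfMoments_eq_rankATE {π : ℝ} (hπ : π ∈ Set.Ioo (0 : ℝ) 1) (μ1 μ0 : Measure ℝ) :
    slopeOfMoments (π * (π / 2 + (1 - π) * (μ1.prod μ0).real {p | p.2 ≤ p.1}), π, 1 / 2)
      = rankATE μ1 μ0 := by
  have hden : π - π ^ 2 ≠ 0 := by nlinarith [hπ.1, hπ.2]
  rw [slopeOfMoments, div_eq_iff hden, rankATE, measureReal_def]
  ring

theorem tendstoInMeasure_olsSlope_rank {Ω : Type*} [MeasurableSpace Ω] {P : Measure Ω}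
    [IsProbabilityMeasure P] {Z : ℕ → Ω → ℝ × ℝ} (hZ : ∀ i, Measurable (Z i))
    (hindep : iIndepFun Z P) (hident : ∀ i, IdentDistrib (Z i) (Z 0) P P)
    (hbin : ∀ i ω, (Z i ω).1 = 0 ∨ (Z i ω).1 = 1)
    (hties : ∀ᵐ ω ∂P, Function.Injective fun i => (Z i ω).2)
    {π : ℝ} (hπ : P.real {ω | (Z 0 ω).1 = 1} = π) (hvar : π - π ^ 2 ≠ 0) :
    TendstoInMeasure P
      (fun n ω => olsSlope n (fun i => (Z i ω).1)
        (fun i => (∑ j ∈ range n, if (Z j ω).2 ≤ (Z i ω).2 then (1 : ℝ) else 0) / n))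
      atTop (fun _ => slopeOfMoments
        (∫ z, rankKernel z ∂((P.map (Z 0)).prod (P.map (Z 0))), π, 1 / 2)) := by
  have : IsProbabilityMeasure (P.map (Z 0)) := Measure.isProbabilityMeasure_map (hZ 0).aemeasurable
  have hV := tendstoInMeasure_vStatistic hZ hindep measurable_rankKernel
    (abs_rankKernel_sub_le (integral_rankKernel_mem_Icc _))
    (fun i j hij =>
      integral_comp_prodMk_eq_integral_prod hZ hindep hident measurable_rankKernel hij)
  have hWmean := integral_eq_measureReal_of_binary (P := P) (measurable_fst.comp (hZ 0)) (hbin 0)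
  have hWbar := (hWmean.trans hπ) ▸ tendstoInMeasure_sum_range_div
    ((integrable_const 1).mono' (measurable_fst.comp (hZ 0)).aestronglyMeasurable
      (.of_forall fun ω => by rcases hbin 0 ω with h | h <;> simp [h]))
    (fun i j hij => (hindep.indepFun hij).comp measurable_fst measurable_fst)
    (fun i => (hident i).comp measurable_fst)
  have hrank : TendstoInMeasure P (fun (n : ℕ) (_ : Ω) => ((n : ℝ) + 1) / (2 * n)) atTop
      (fun _ => 1 / 2) :=
    tendstoInMeasure_of_tendsto_ae (fun _ => aestronglyMeasurable_const)
      (.of_forall fun _ => tendsto_add_one_div_two_mul)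
  have hmeans := hWbar.prodMk hrank
  have hlim := (hV.prodMk hmeans).comp_continuousAt (continuousAt_slopeOfMoments hvar)
  refine hlim.congr' ?_ EventuallyEq.rfl
  filter_upwards [eventually_ne_atTop 0] with n hn
  filter_upwards [hties] with ω hω
  exact (olsSlope_rank_eq hn (fun i => hbin i ω) hω.injOn).symm

/-- Theorem 1 (rank-OLS without covariates under random assignment): under SUTVA,
absolute continuity of the potential outcome distributions, and completely random
assignment with `P(W_i = 1 | Y_i(1), Y_i(0), X_i) = π ∈ (0,1)`, the OLS slope on `W_i`
in the regression of the normalized rank `R^Y_i / n` on a constant and `W_i` converges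
in probability to the rank-ATE `τ_r(F_{Y(1)}, F_{Y(0)})`. -/
theorem rankOLS_binary_randomized
    {Ω : Type*} [MeasurableSpace Ω] (P : Measure Ω) [IsProbabilityMeasure P]
    (d : ℕ) (Y1 Y0 W Y : ℕ → Ω → ℝ) (X : ℕ → Ω → Fin d → ℝ)
    -- measurability of the data
    (hmeas : ∀ i, Measurable (fun ω => (Y1 i ω, Y0 i ω, W i ω, X i ω)))
    -- the treatment is binary
    (hbin : ∀ i ω, W i ω = 0 ∨ W i ω = 1)
    -- the data are i.i.d. across units
    (hindep : iIndepFun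
      (fun i ω => (Y1 i ω, Y0 i ω, W i ω, X i ω)) P)
    (hident : ∀ i, IdentDistrib (fun ω => (Y1 i ω, Y0 i ω, W i ω, X i ω))
      (fun ω => (Y1 0 ω, Y0 0 ω, W 0 ω, X 0 ω)) P P)
    -- Assumption 1 (SUTVA)
    (hSUTVA : ∀ i ω, Y i ω = Y1 i ω * W i ω + Y0 i ω * (1 - W i ω))
    -- Assumption 2 (absolutely continuous potential outcome distributions)
    (habs1 : P.map (Y1 0) ≪ MeasureTheory.volume)
    (habs0 : P.map (Y0 0) ≪ MeasureTheory.volume)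
    -- Assumption 3 (completely random assignment with marginal intensity π ∈ (0,1))
    (π : ℝ) (hπ : π ∈ Set.Ioo (0 : ℝ) 1)
    (hrand : ∀ i, IndepFun (W i) (fun ω => (Y1 i ω, Y0 i ω, X i ω)) P)
    (hintensity : ∀ i, P {ω | W i ω = 1} = ENNReal.ofReal π) :
    TendstoInMeasure P
      (fun n ω => olsSlope n (fun i => W i ω)
        (fun i => (∑ j ∈ Finset.range n, if Y j ω ≤ Y i ω then (1 : ℝ) else 0) / n))
      atTop
      (fun _ => rankATE (P.map (Y1 0)) (P.map (Y0 0))) := by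
  obtain rfl : Y = fun i ω => Y1 i ω * W i ω + Y0 i ω * (1 - W i ω) :=
    funext fun i => funext (hSUTVA i)
  have hY1 : Measurable (Y1 0) := measurable_fst.comp (hmeas 0)
  have hY0 : Measurable (Y0 0) := (measurable_fst.comp measurable_snd).comp (hmeas 0)
  have hW : Measurable (W 0) :=
    (measurable_fst.comp (measurable_snd.comp measurable_snd)).comp (hmeas 0)
  set obs : ℝ × ℝ × ℝ × (Fin d → ℝ) → ℝ × ℝ :=
    fun x => (x.2.2.1, x.1 * x.2.2.1 + x.2.1 * (1 - x.2.2.1))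
  have hobs : Measurable obs := by fun_prop
  set Z : ℕ → Ω → ℝ × ℝ := fun i ω => obs (Y1 i ω, Y0 i ω, W i ω, X i ω)
  have hZ : ∀ i, Measurable (Z i) := fun i => hobs.comp (hmeas i)
  have hZindep : iIndepFun Z P := hindep.comp (fun _ => obs) (fun _ => hobs)
  have hZident : ∀ i, IdentDistrib (Z i) (Z 0) P P := fun i => (hident i).comp hobs
  have : NullSingletonClass (P.map (Y1 0)) := ⟨fun _ => habs1 Real.volume_singleton⟩
  have : NullSingletonClass (P.map (Y0 0)) := ⟨fun _ => habs0 Real.volume_singleton⟩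
  have hnull : ∀ j, NullSingletonClass (P.map (Prod.snd ∘ Z j)) := fun j => by
    rw [((hZident j).comp measurable_snd).map_eq]
    exact nullSingletonClass_map_observed hW hY1 hY0 (hbin 0)
  have hties := ae_injective_of_indepFun (fun i => measurable_snd.comp (hZ i))
    (fun i j hij => (hZindep.indepFun hij).comp measurable_snd measurable_snd) hnull
  have hπreal : P.real {ω | W 0 ω = 1} = π := by
    rw [measureReal_def, hintensity 0, ENNReal.toReal_ofReal hπ.1.le]
  have hlim := tendstoInMeasure_olsSlope_rank hZ hZindep hZident hbin hties
    hπreal (by nlinarith [hπ.1, hπ.2])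
  rwa [integral_rankKernel_map_prod hW hY1 hY0 (hbin 0)
    ((hrand 0).comp measurable_id measurable_fst)
    ((hrand 0).comp measurable_id (measurable_fst.comp measurable_snd)) hπreal,
    slopeOfMoments_eq_rankATE hπ] at hlim
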